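/- There exist a constant C > 0 and a deterministic one-bit-feedback context-free algorithm posting a single price per round such that for every horizon T ∈ ℕ and all s, b ∈ [0,1], the gain-from-trade regret satisfies ∑_{t=1}^T max(b − s, 0) − ∑_{t=1}^T (b − s)·1{s ≤ p_t ≤ b} ≤ C. (The dyadic-search algorithm achieves this.) -/

import Mathlib

/-!
Post the midpoints of the dyadic intervals level by level (1/2, 1/4, 3/4, 1/8, 3/8, …) until
the first trade, and repeat the traded price forever after, so that every later round trades
too. If `2⁻ᵏ < b - s ≤ 2¹⁻ᵏ`, the interval `[s, b]` contains a midpoint of level `k`, which is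
posted before round `2ᵏ⁺¹`; each of the rounds before the first trade loses at most `b - s`, so
the regret is at most `2ᵏ⁺¹ (b - s) ≤ 4`.
-/

open Finset

noncomputable section

/-- A deterministic one-bit-feedback context-free algorithm posting a single price per
round: from the history (price, trade bit), produce the next price. -/
abbrev AlgoCF := List (ℝ × Bool) → ℝ

/-- The history of the first `t` rounds. -/
def histCF (Alg : AlgoCF) (s b : ℝ) : ℕ → List (ℝ × Bool)
  | 0 => []
  | t + 1 =>
    let h := histCF Alg s b t
    let p := Alg h
    h ++ [(p, decide (s ≤ p ∧ p ≤ b))]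

/-- The price posted at round `t`. -/
def priceCF (Alg : AlgoCF) (s b : ℝ) (t : ℕ) : ℝ :=
  Alg (histCF Alg s b t)

section Regret

variable {p : ℕ → ℝ} {s b : ℝ}

theorem regret_le_of_forall_ge_mem_Icc {N : ℕ} (hN : ∀ t, N ≤ t → p t ∈ Set.Icc s b)
    (T : ℕ) :
    ∑ _t ∈ range T, max (b - s) 0 -
        ∑ t ∈ range T, (if s ≤ p t ∧ p t ≤ b then b - s else 0) ≤ N * (b - s) := by
  have hsb : s ≤ b := (hN N le_rfl).1.trans (hN N le_rfl).2
  rw [← sum_sub_distrib, max_eq_left (sub_nonneg.2 hsb)]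
  calc ∑ t ∈ range T, (b - s - if s ≤ p t ∧ p t ≤ b then b - s else 0)
      ≤ ∑ t ∈ range T, if t < N then b - s else 0 := by
        refine sum_le_sum fun t _ => ?_
        by_cases htN : t < N
        · split_ifs <;> linarith
        · rw [if_pos (show s ≤ p t ∧ p t ≤ b from hN t (not_lt.1 htN)), if_neg htN, sub_self]
    _ = #{t ∈ range T | t < N} * (b - s) := by rw [← sum_filter, sum_const, nsmul_eq_mul]
    _ ≤ N * (b - s) := by
        have hcard : #{t ∈ range T | t < N} ≤ N :=
          (card_le_card fun t ht => mem_range.2 (mem_filter.1 ht).2).trans_eq (card_range N)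
        exact mul_le_mul_of_nonneg_right (by exact_mod_cast hcard) (sub_nonneg.2 hsb)

theorem regret_nonpos_of_le (hbs : b ≤ s) (T : ℕ) :
    ∑ _t ∈ range T, max (b - s) 0 -
        ∑ t ∈ range T, (if s ≤ p t ∧ p t ≤ b then b - s else 0) ≤ 0 := by
  rw [← sum_sub_distrib, max_eq_right (sub_nonpos.2 hbs)]
  refine sum_nonpos fun t _ => ?_
  split_ifs with htrade
  · linarith [htrade.1.trans htrade.2]
  · rw [sub_zero]

end Regret

/-- Writing `n + 1 = 2 ^ k + i` with `i < 2 ^ k`, the `n`-th price is the midpoint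
`(i + 1/2) / 2 ^ k` of the `i`-th dyadic interval of length `2⁻ᵏ`. -/
def dyadicPrice (n : ℕ) : ℝ :=
  ((n + 1 - 2 ^ Nat.log 2 (n + 1) : ℕ) + 1 / 2) / 2 ^ Nat.log 2 (n + 1)

theorem dyadicPrice_two_pow_add_sub_one {k i : ℕ} (hi : i < 2 ^ k) :
    dyadicPrice (2 ^ k + i - 1) = (i + 1 / 2) / 2 ^ k := by
  have hpos : 0 < 2 ^ k := Nat.two_pow_pos k
  have hsucc : 2 ^ k + i - 1 + 1 = 2 ^ k + i := by omega
  have hlog : Nat.log 2 (2 ^ k + i) = k :=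
    Nat.log_eq_of_pow_le_of_lt_pow (by omega) (by rw [pow_succ]; omega)
  rw [dyadicPrice, hsucc, hlog, Nat.add_sub_cancel_left]

theorem exists_nat_add_half_mem_Icc {x y : ℝ} (hx : 0 ≤ x) (hxy : x + 1 ≤ y) :
    ∃ i : ℕ, (i : ℝ) + 1 / 2 ∈ Set.Icc x y := by
  refine ⟨⌊x + 1 / 2⌋₊, ?_, ?_⟩
  · linarith [Nat.lt_floor_add_one (x + 1 / 2)]
  · linarith [Nat.floor_le (by positivity : 0 ≤ x + 1 / 2)]

theorem exists_dyadicPrice_mem_Icc {s b : ℝ} (hs : 0 ≤ s) (hb : b ≤ 1) (hsb : s < b) :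
    ∃ N : ℕ, dyadicPrice N ∈ Set.Icc s b ∧ N * (b - s) ≤ 4 := by
  obtain ⟨n, hn, hn'⟩ := exists_nat_pow_near (one_le_one_div (sub_pos.2 hsb) (by linarith))
    one_lt_two
  rw [le_div_iff₀ (sub_pos.2 hsb)] at hn
  rw [div_lt_iff₀ (sub_pos.2 hsb)] at hn'
  set k := n + 1
  have hk : (0 : ℝ) < 2 ^ k := by positivity
  obtain ⟨i, hi_ge, hi_le⟩ := exists_nat_add_half_mem_Icc (x := 2 ^ k * s) (y := 2 ^ k * b)
    (by positivity) (by linarith)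
  have hik : i < 2 ^ k := by exact_mod_cast (show (i : ℝ) < 2 ^ k by nlinarith)
  refine ⟨2 ^ k + i - 1, ?_, ?_⟩
  · rw [dyadicPrice_two_pow_add_sub_one hik]
    constructor
    · rw [le_div_iff₀ hk]; linarith
    · rw [div_le_iff₀ hk]; linarith
  · have hN : ((2 ^ k + i - 1 : ℕ) : ℝ) ≤ 2 * 2 ^ k := by
      exact_mod_cast (show 2 ^ k + i - 1 ≤ 2 * 2 ^ k by omega)
    have hgap : (2 : ℝ) ^ k * (b - s) ≤ 2 := by rw [pow_succ]; linarith
    nlinarith [sub_pos.2 hsb]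

section History

variable {Alg : AlgoCF} {s b : ℝ}

theorem histCF_prefix {r t : ℕ} (h : r ≤ t) : histCF Alg s b r <+: histCF Alg s b t := by
  induction t, h using Nat.le_induction with
  | base => exact List.prefix_refl _
  | succ t _ ih => exact ih.trans (List.prefix_append _ _)

theorem length_histCF (t : ℕ) : (histCF Alg s b t).length = t := by
  induction t with
  | zero => rfl
  | succ t ih => simp [histCF, ih]

theorem mem_Icc_of_mem_histCF {t : ℕ} {x : ℝ × Bool} (hx : x ∈ histCF Alg s b t)
    (htrade : x.2 = true) : x.1 ∈ Set.Icc s b := by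
  induction t with
  | zero => simp [histCF] at hx
  | succ t ih =>
    rcases List.mem_append.1 hx with hx | hx
    · exact ih hx
    · obtain rfl := List.mem_singleton.1 hx
      simpa using htrade

theorem mem_histCF_of_mem_Icc {r t : ℕ} (htrade : priceCF Alg s b r ∈ Set.Icc s b)
    (hrt : r < t) : (priceCF Alg s b r, true) ∈ histCF Alg s b t := by
  refine (histCF_prefix hrt).subset ?_
  simpa [histCF, priceCF] using Or.inr htrade

end History

def dyadicSearch : AlgoCF := fun h =>
  match h.find? (·.2) with
  | some x => x.1
  | none => dyadicPrice h.length

section DyadicSearch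

variable {s b : ℝ}

theorem priceCF_dyadicSearch_mem_Icc_of_mem_histCF {t : ℕ} {x : ℝ × Bool}
    (hx : x ∈ histCF dyadicSearch s b t) (htrade : x.2 = true) :
    priceCF dyadicSearch s b t ∈ Set.Icc s b := by
  obtain ⟨y, hy⟩ := Option.isSome_iff_exists.1
    (List.find?_isSome.2 ⟨x, hx, htrade⟩ : ((histCF dyadicSearch s b t).find? (·.2)).isSome)
  rw [priceCF, dyadicSearch, hy]
  exact mem_Icc_of_mem_histCF (List.mem_of_find?_eq_some hy) (by simpa using List.find?_some hy)

theorem priceCF_dyadicSearch_eq_dyadicPrice {t : ℕ}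
    (h : ∀ x ∈ histCF dyadicSearch s b t, x.2 = false) :
    priceCF dyadicSearch s b t = dyadicPrice t := by
  rw [priceCF, dyadicSearch, List.find?_eq_none.2 (by simpa using h), length_histCF]

theorem priceCF_dyadicSearch_mem_Icc {N t : ℕ} (hN : dyadicPrice N ∈ Set.Icc s b)
    (ht : N ≤ t) : priceCF dyadicSearch s b t ∈ Set.Icc s b := by
  have htradeN : priceCF dyadicSearch s b N ∈ Set.Icc s b := by
    by_cases h : ∃ x ∈ histCF dyadicSearch s b N, x.2 = true
    · obtain ⟨x, hx, htrade⟩ := h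
      exact priceCF_dyadicSearch_mem_Icc_of_mem_histCF hx htrade
    · push Not at h
      rwa [priceCF_dyadicSearch_eq_dyadicPrice (by simpa using h)]
  rcases ht.eq_or_lt with rfl | hlt
  · exact htradeN
  · exact priceCF_dyadicSearch_mem_Icc_of_mem_histCF (mem_histCF_of_mem_Icc htradeN hlt) rfl

end DyadicSearch

/-- Context-free efficiency maximization with one-bit feedback: the dyadic-search
algorithm has gain-from-trade regret bounded by a constant, uniformly in the horizon `T`
and the valuations `s, b ∈ [0,1]`. -/
theorem exists_context_free_gft_algorithm :
    ∃ C : ℝ, 0 < C ∧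
      ∃ Alg : AlgoCF,
        ∀ (T : ℕ) (s b : ℝ), s ∈ Set.Icc (0:ℝ) 1 → b ∈ Set.Icc (0:ℝ) 1 →
          ∑ _t ∈ Finset.range T, max (b - s) 0 -
            ∑ t ∈ Finset.range T,
              (if s ≤ priceCF Alg s b t ∧ priceCF Alg s b t ≤ b then b - s else 0)
            ≤ C := by
  refine ⟨4, by norm_num, dyadicSearch, fun T s b hs hb => ?_⟩
  rcases lt_or_ge s b with hsb | hbs
  · obtain ⟨N, hN, hNregret⟩ := exists_dyadicPrice_mem_Icc hs.1 hb.2 hsb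
    exact (regret_le_of_forall_ge_mem_Icc (fun _ => priceCF_dyadicSearch_mem_Icc hN) T).trans
      hNregret
  · exact (regret_nonpos_of_le hbs T).trans (by norm_num)

end
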